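/- arXiv:2408.17209 — 3 statements merged into one kernel-verified Lean document; each statement's English description precedes it below -/
import Mathlib

section
/- Let (Ω, μ) be a probability space, X : Ω → ℝ a square-integrable random variable with mean m = E[X], and A ⊆ Ω a measurable event. Define Y = X on A and Y = m on the complement of A (i.e., Y = 1_A·X + 1_{Aᶜ}·m). Then Var[Y] ≤ Var[X]. -/
/-! On `A` the new variable deviates from `m` exactly as `X` does, and off `A` not at all, so
its squared deviation from `m` is pointwise at most that of `X`. Since the variance of a variable
is at most its mean squared deviation from any constant, the claim follows. -/

open MeasureTheory ProbabilityTheory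

namespace ProbabilityTheory

variable {Ω : Type*} [MeasurableSpace Ω] {μ : Measure Ω} [IsProbabilityMeasure μ] {X Y : Ω → ℝ}

lemma variance_le_integral_sub_sq (hY : AEStronglyMeasurable Y μ) (c : ℝ) :
    Var[Y; μ] ≤ ∫ ω, (Y ω - c) ^ 2 ∂μ := by
  rw [← variance_sub_const hY c]
  exact variance_le_expectation_sq (hY.sub aestronglyMeasurable_const)

lemma variance_le_of_sq_sub_le (hX : MemLp X 2 μ) (hY : AEStronglyMeasurable Y μ) (c : ℝ)
    (h : ∀ᵐ ω ∂μ, (Y ω - c) ^ 2 ≤ (X ω - μ[X]) ^ 2) :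
    Var[Y; μ] ≤ Var[X; μ] :=
  calc Var[Y; μ] ≤ ∫ ω, (Y ω - c) ^ 2 ∂μ := variance_le_integral_sub_sq hY c
    _ ≤ ∫ ω, (X ω - μ[X]) ^ 2 ∂μ :=
      integral_mono_of_nonneg (ae_of_all _ fun _ => sq_nonneg _)
        (hX.sub (memLp_const _)).integrable_sq h
    _ = Var[X; μ] := (variance_eq_integral hX.aestronglyMeasurable.aemeasurable).symm

end ProbabilityTheory

/-- **Variance reduction lemma.** Let `(Ω, μ)` be a probability space,
`X : Ω → ℝ` square-integrable with mean `m = E[X]`, and `A ⊆ Ω` a measurable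
event. The random variable `Y = 1_A·X + 1_{Aᶜ}·m` (equal to `X` on `A` and to
the constant `m` off `A`) has variance at most that of `X`. -/
theorem variance_piecewise_mean_le {Ω : Type*} [MeasurableSpace Ω]
    (μ : Measure Ω) [IsProbabilityMeasure μ]
    (X : Ω → ℝ) (hX : MemLp X 2 μ) (A : Set Ω) (hA : MeasurableSet A) :
    variance
        (fun ω => A.indicator X ω + Aᶜ.indicator (fun _ => ∫ x, X x ∂μ) ω) μ
      ≤ variance X μ := by
  have hY : AEStronglyMeasurable
      (fun ω => A.indicator X ω + Aᶜ.indicator (fun _ => ∫ x, X x ∂μ) ω) μ :=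
    (hX.aestronglyMeasurable.indicator hA).add (aestronglyMeasurable_const.indicator hA.compl)
  refine variance_le_of_sq_sub_le hX hY (∫ x, X x ∂μ) (ae_of_all _ fun ω => ?_)
  by_cases hω : ω ∈ A <;> simp [hω, sq_nonneg]
end

section
/- Var[est_hybrid] ≤ (1/b)·card²·(1/η − 1). That is, for any measurable event A ⊆ Ω (the event on which the algorithm returns the sampled estimate rather than performing an exact index execution), the hybrid estimator est_hybrid defined by est_hybrid(ω) = est(ω) for ω ∈ A and est_hybrid(ω) = card for ω ∉ A satisfies Var[est_hybrid] ≤ (1/b)·card²·(1/η − 1), where η = card/rSum and 1 ≤ card. -/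
/-! The sampled estimator `est` is unbiased, `E[est] = card`, and the hybrid estimator agrees
with `est` on `A` and with `card` off `A`. So its squared deviation from `card` is pointwise
at most that of `est`, and its variance is at most `Var[est]`. Since `est` is `rSum / b` times
a sum of `b` i.i.d. Bernoulli(η) indicators, `Var[est] ≤ (rSum / b)² · b · η (1 - η)`, which
is the claimed bound. -/

open MeasureTheory ProbabilityTheory

/-- The uniform probability measure on `Fin n` (for `0 < n`). -/
noncomputable abbrev uniformFin (n : ℕ) (hn : 0 < n) : Measure (Fin n) :=
  (PMF.uniformOfFinset (Finset.univ : Finset (Fin n))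
    ⟨⟨0, hn⟩, Finset.mem_univ _⟩).toMeasure

section

variable {Ω : Type*} [MeasurableSpace Ω] {μ : Measure Ω} [IsProbabilityMeasure μ]

lemma variance_indicator_add_indicator_compl_const_le {X : Ω → ℝ} {A : Set Ω} {c : ℝ}
    (hX : MemLp X 2 μ) (hA : MeasurableSet A) (hc : μ[X] = c) :
    Var[fun ω ↦ A.indicator X ω + Aᶜ.indicator (fun _ ↦ c) ω; μ] ≤ Var[X; μ] := by
  set H := fun ω ↦ A.indicator X ω + Aᶜ.indicator (fun _ ↦ c) ω
  have hH : AEStronglyMeasurable H μ :=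
    (hX.aestronglyMeasurable.indicator hA).add (aestronglyMeasurable_const.indicator hA.compl)
  have hdev : (fun ω ↦ H ω - c) ^ 2 = A.indicator fun ω ↦ (X ω - c) ^ 2 := by
    ext ω
    by_cases hω : ω ∈ A <;> simp [H, hω]
  calc Var[H; μ] = Var[fun ω ↦ H ω - c; μ] := (variance_sub_const hH c).symm
    _ ≤ μ[(fun ω ↦ H ω - c) ^ 2] :=
      variance_le_expectation_sq (hH.sub aestronglyMeasurable_const)
    _ = ∫ ω in A, (X ω - c) ^ 2 ∂μ := by rw [hdev, integral_indicator hA]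
    _ ≤ ∫ ω, (X ω - c) ^ 2 ∂μ :=
      setIntegral_le_integral (hX.sub (memLp_const c)).integrable_sq
        (ae_of_all _ fun _ ↦ sq_nonneg _)
    _ = Var[X; μ] := by rw [variance_eq_integral hX.aemeasurable, hc]

lemma variance_indicator_one_le {s : Set Ω} (hs : MeasurableSet s) :
    Var[s.indicator 1; μ] ≤ μ.real s * (1 - μ.real s) := by
  have h01 : ∀ ω, s.indicator (1 : Ω → ℝ) ω ∈ Set.Icc 0 1 := fun ω ↦ by
    by_cases hω : ω ∈ s <;> simp [hω]
  have := variance_le_sub_mul_sub (ae_of_all μ h01) (measurable_const.indicator hs).aemeasurable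
  rwa [integral_indicator_one hs, sub_zero, mul_comm] at this

end

section

variable {ι α : Type*} [Fintype ι] [MeasurableSpace α] {ν : Measure α}
  [IsProbabilityMeasure ν] {f : α → ℝ}

lemma integral_sum_comp_eval_pi (hf : Integrable f ν) :
    ∫ ω, ∑ i, f (ω i) ∂(Measure.pi fun _ : ι ↦ ν) =
      Fintype.card ι * ∫ x, f x ∂ν := by
  rw [integral_finsetSum _ fun i _ ↦ integrable_comp_eval hf]
  simp [integral_comp_eval (μ := fun _ ↦ ν) hf.aestronglyMeasurable]

lemma variance_sum_comp_eval_pi (hf : MemLp f 2 ν) :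
    Var[fun ω ↦ ∑ i, f (ω i); Measure.pi fun _ : ι ↦ ν] =
      Fintype.card ι * Var[f; ν] := by
  simpa [Finset.sum_fn] using
    variance_sum_pi (ι := ι) (μ := fun _ ↦ ν) (X := fun _ ↦ f) fun _ ↦ hf

end

lemma uniformFin_real_apply {n : ℕ} (hn : 0 < n) (s : Finset (Fin n)) :
    (uniformFin n hn).real s = s.card / n := by
  have := PMF.toMeasure_uniformOfFinset_apply (s := Finset.univ)
    ⟨(⟨0, hn⟩ : Fin n), Finset.mem_univ _⟩ (t := s) s.measurableSet
  simp only [Measure.real, uniformFin, this]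
  simp

/-- **Theorem 2 (variance, with hybrid estimation).** For any measurable event
`A` (on which the algorithm returns the sampled estimate, while off `A` an
exact index execution returns the true cardinality `card`), the hybrid
estimator `est_hybrid = 1_A·est + 1_{Aᶜ}·card` satisfies
`Var[est_hybrid] ≤ (1/b) * card² * (1/η − 1)` where `η = card / rSum`. -/
theorem ice_hybrid_variance_le (rSum b card : ℕ) (hr : 0 < rSum) (hb : 0 < b)
    (hcard : 1 ≤ card) (S : Finset (Fin rSum)) (hS : S.card = card)
    (A : Set (Fin b → Fin rSum)) (hA : MeasurableSet A) :
    variance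
        (fun ω : Fin b → Fin rSum =>
          A.indicator
            (fun ω' : Fin b → Fin rSum =>
              (((Finset.univ.filter fun i : Fin b => ω' i ∈ S).card : ℝ) / b) * rSum) ω
          + Aᶜ.indicator (fun _ => (card : ℝ)) ω)
        (Measure.pi fun _ : Fin b => uniformFin rSum hr)
      ≤ (1 / (b : ℝ)) * (card : ℝ) ^ 2 * (1 / ((card : ℝ) / (rSum : ℝ)) - 1) := by
  set μ := uniformFin rSum hr
  set hit : Fin rSum → ℝ := (S : Set (Fin rSum)).indicator 1
  have hη : μ.real S = card / rSum := by simp [μ, uniformFin_real_apply, hS]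
  have hest : (fun ω : Fin b → Fin rSum =>
      (((Finset.univ.filter fun i : Fin b => ω i ∈ S).card : ℝ) / b) * rSum)
      = fun ω ↦ (rSum / b : ℝ) * ∑ i, hit (ω i) := by
    ext ω
    rw [Finset.natCast_card_filter]
    simp only [Finset.sum_boole, Set.indicator_apply, SetLike.mem_coe, Pi.one_apply, hit]
    ring
  have hunbiased : ∫ ω, (rSum / b : ℝ) * ∑ i, hit (ω i) ∂(Measure.pi fun _ : Fin b ↦ μ)
      = card := by
    rw [integral_const_mul, integral_sum_comp_eval_pi Integrable.of_finite,
      integral_indicator_one S.measurableSet, Fintype.card_fin, hη]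
    field_simp
  rw [hest]
  calc _ ≤ Var[fun ω ↦ (rSum / b : ℝ) * ∑ i, hit (ω i);
          Measure.pi fun _ : Fin b ↦ μ] :=
        variance_indicator_add_indicator_compl_const_le MemLp.of_discrete hA hunbiased
    _ = (rSum / b : ℝ) ^ 2 * (b * Var[hit; μ]) := by
        rw [variance_const_mul, variance_sum_comp_eval_pi MemLp.of_discrete, Fintype.card_fin]
    _ ≤ (rSum / b : ℝ) ^ 2 * (b * (card / rSum * (1 - card / rSum))) := by
        gcongr
        rw [← hη]
        exact variance_indicator_one_le S.measurableSet
    _ = _ := by field_simp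
end

section
/- The Z-order encoding is monotone with respect to the coordinatewise (dominance) order: if x and y are tuples with x_i < 2^β and y_i < 2^β for all i < m, and x_i ≤ y_i for every i, then Z(x) ≤ Z(y). Consequently, for any query box with lower corner lo and upper corner hi, every tuple t with lo_i ≤ t_i ≤ hi_i for all i satisfies Z(lo) ≤ Z(t) ≤ Z(hi). -/
/-!
Regrouping the double sum by attribute gives `Z(x) = Σ_i evalBits (2^m) β (x_i) · 2^i`, where
`evalBits b β n` reads the low `β` binary digits of `n` as digits in base `b`. For `b ≥ 2` this is
strictly monotone below `2^β` (compare the high parts `n / 2`; if they agree, the last bit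
decides), so `Z` is a sum of monotone terms.
-/

/-- The Z-order (Morton) encoding of a tuple `x : Fin m → ℕ` with `β` bits per
attribute: `Z(x) = Σ_{j<β} Σ_{i<m} bit_j(x_i) · 2^(j·m + i)`, where
`bit_j(n) = n / 2^j % 2` is the `j`-th binary digit of `n`. -/
def zOrder (m β : ℕ) (x : Fin m → ℕ) : ℕ :=
  ∑ j ∈ Finset.range β, ∑ i : Fin m, (x i / 2 ^ j % 2) * 2 ^ (j * m + (i : ℕ))

open Finset

def evalBits (b β n : ℕ) : ℕ :=
  ∑ j ∈ range β, (n / 2 ^ j % 2) * b ^ j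

theorem evalBits_succ (b β n : ℕ) :
    evalBits b (β + 1) n = n % 2 + b * evalBits b β (n / 2) := by
  rw [evalBits, sum_range_succ', evalBits, mul_sum, add_comm]
  congr 1
  · simp
  · refine sum_congr rfl fun j _ => ?_
    rw [Nat.div_div_eq_div_mul, ← pow_succ', pow_succ']
    ring

theorem evalBits_strictMonoOn {b : ℕ} (hb : 2 ≤ b) (β : ℕ) :
    StrictMonoOn (evalBits b β) (Set.Iio (2 ^ β)) := by
  induction β with
  | zero => intro a ha; simp_all
  | succ β ih =>
    intro a _ c hc hac
    have hc' : c / 2 < 2 ^ β := Nat.div_lt_of_lt_mul (by simpa [pow_succ'] using hc)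
    rw [evalBits_succ, evalBits_succ]
    rcases (Nat.div_le_div_right (c := 2) hac.le).eq_or_lt with hdiv | hdiv
    · rw [hdiv]
      omega
    · have hlt := ih (hdiv.trans hc') hc' hdiv
      have : b * (evalBits b β (a / 2) + 1) ≤ b * evalBits b β (c / 2) :=
        Nat.mul_le_mul_left b hlt
      rw [mul_add_one] at this
      omega

theorem zOrder_eq_sum_evalBits (m β : ℕ) (x : Fin m → ℕ) :
    zOrder m β x = ∑ i : Fin m, evalBits (2 ^ m) β (x i) * 2 ^ (i : ℕ) := by
  rw [zOrder, sum_comm]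
  refine sum_congr rfl fun i _ => ?_
  rw [evalBits, sum_mul]
  refine sum_congr rfl fun j _ => ?_
  rw [pow_add, pow_mul']
  ring

theorem zOrder_le_zOrder {m β : ℕ} {x y : Fin m → ℕ} (hy : ∀ i, y i < 2 ^ β)
    (hxy : x ≤ y) : zOrder m β x ≤ zOrder m β y := by
  rw [zOrder_eq_sum_evalBits, zOrder_eq_sum_evalBits]
  gcongr with i
  have h2m : 2 ≤ 2 ^ m := Nat.le_self_pow i.pos.ne' 2
  exact (evalBits_strictMonoOn h2m β).monotoneOn ((hxy i).trans_lt (hy i)) (hy i) (hxy i)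

theorem zOrder_monotone_general (m β : ℕ) :
    (∀ x y : Fin m → ℕ, (∀ i, x i < 2 ^ β) → (∀ i, y i < 2 ^ β) →
      (∀ i, x i ≤ y i) → zOrder m β x ≤ zOrder m β y) ∧
    (∀ lo hi t : Fin m → ℕ, (∀ i, lo i < 2 ^ β) → (∀ i, hi i < 2 ^ β) →
      (∀ i, t i < 2 ^ β) → (∀ i, lo i ≤ t i ∧ t i ≤ hi i) →
      zOrder m β lo ≤ zOrder m β t ∧ zOrder m β t ≤ zOrder m β hi) :=
  ⟨fun _ _ _ hy hxy => zOrder_le_zOrder hy hxy,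
    fun _ _ _ _ hhi ht hbox =>
      ⟨zOrder_le_zOrder ht fun i => (hbox i).1, zOrder_le_zOrder hhi fun i => (hbox i).2⟩⟩

/-- **Monotonicity of the Z-order encoding.** If `x` and `y` are tuples with
all coordinates below `2^β` and `x_i ≤ y_i` for every `i`, then
`Z(x) ≤ Z(y)`. Consequently, for any query box with lower corner `lo` and
upper corner `hi`, every tuple `t` in the box satisfies
`Z(lo) ≤ Z(t) ≤ Z(hi)`. -/
theorem zOrder_monotone (m β : ℕ) (hm : 0 < m) (hβ : 0 < β) :
    (∀ x y : Fin m → ℕ, (∀ i, x i < 2 ^ β) → (∀ i, y i < 2 ^ β) →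
      (∀ i, x i ≤ y i) → zOrder m β x ≤ zOrder m β y) ∧
    (∀ lo hi t : Fin m → ℕ, (∀ i, lo i < 2 ^ β) → (∀ i, hi i < 2 ^ β) →
      (∀ i, t i < 2 ^ β) → (∀ i, lo i ≤ t i ∧ t i ≤ hi i) →
      zOrder m β lo ≤ zOrder m β t ∧ zOrder m β t ≤ zOrder m β hi) :=
  zOrder_monotone_general m β
end
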